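/- Let ν ∈ R^r and ξ ∈ R^n be zero-mean random vectors with Σ_ξ positive definite, and let W ∈ R^{r×r}. Then the minimum of E[‖ν − B L ξ‖²_W] over L ∈ R^{c×n} and B ∈ R^{r×c} equals tr(W Σ_ν W^T) − (λ₁ + ⋯ + λ_c), where λ₁ ≥ ⋯ ≥ λ_c are the c largest eigenvalues of the PSD matrix W Σ_{νξ} Σ_ξ^{-1} Σ_{ξν} W^T. -/

import Mathlib

/-!
With `G = W Σ_{νξ} Σ_ξ⁻¹` and `M = G Σ_ξ Gᵀ = W Σ_{νξ} Σ_ξ⁻¹ Σ_{ξν} Wᵀ`, completing the square gives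
`f L B = tr (W Σ_ν Wᵀ) - tr M + tr ((WBL - G) Σ_ξ (WBL - G)ᵀ)`.

Lower bound: let `P` be the orthogonal projection onto the column space of `WB`, so `tr P ≤ c`
and `P (WBL) = WBL`. Splitting `WBL - G` along `P` and `1 - P` bounds the last term below by
`tr M - tr (P M)`, and Ky Fan's inequality `tr (P M) ≤ λ₁ + ⋯ + λ_c` concludes.

Attainment: take `WBL = P G` with `P` the projection onto the eigenvectors of the top `c`
eigenvalues that are nonzero. Then `tr (P M) = λ₁ + ⋯ + λ_c`, and `P` factors through `M`, hence
through `W`, since `M = W (Σ_{νξ} Σ_ξ⁻¹ Σ_{ξν} Wᵀ)`.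
-/

open Matrix

theorem Finset.exists_card_eq_isGreatest_sum {ι : Type*} [Fintype ι] (f : ι → ℝ) {c : ℕ}
    (hc : c ≤ Fintype.card ι) :
    ∃ S : Finset ι, S.card = c ∧
      IsGreatest {s | ∃ T : Finset ι, T.card = c ∧ s = ∑ i ∈ T, f i} (∑ i ∈ S, f i) := by
  obtain ⟨S, hS, hmax⟩ := Finset.exists_max_image (Finset.powersetCard c Finset.univ)
    (fun T ↦ ∑ i ∈ T, f i) (Finset.powersetCard_nonempty.mpr (by simpa using hc))
  rw [Finset.mem_powersetCard_univ] at hS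
  refine ⟨S, hS, ⟨S, hS, rfl⟩, ?_⟩
  rintro _ ⟨T, hT, rfl⟩
  exact hmax T (Finset.mem_powersetCard_univ.mpr hT)

theorem Finset.le_of_isGreatest_sum {ι : Type*} [DecidableEq ι] {f : ι → ℝ} {c : ℕ}
    {S : Finset ι} (hS : S.card = c)
    (hgreat : IsGreatest {s | ∃ T : Finset ι, T.card = c ∧ s = ∑ i ∈ T, f i} (∑ i ∈ S, f i)) :
    ∀ i ∈ S, ∀ j ∉ S, f j ≤ f i := by
  intro i hi j hj
  have hjS : j ∉ S.erase i := fun h ↦ hj (Finset.mem_of_mem_erase h)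
  have hcard : (insert j (S.erase i)).card = c := by
    rw [Finset.card_insert_of_notMem hjS, Finset.card_erase_of_mem hi, ← hS,
      Nat.sub_add_cancel (Finset.card_pos.mpr ⟨i, hi⟩)]
  have hswap := hgreat.2 ⟨_, hcard, rfl⟩
  rw [Finset.sum_insert hjS, Finset.sum_erase_eq_sub hi] at hswap
  linarith

theorem Finset.sum_mul_le_sum_of_forall_le {ι : Type*} [Fintype ι] {lam q : ι → ℝ} {S : Finset ι}
    (hlam : ∀ i, 0 ≤ lam i) (hq0 : ∀ i, 0 ≤ q i) (hq1 : ∀ i, q i ≤ 1)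
    (hqS : ∑ i, q i ≤ S.card) (hS : ∀ i ∈ S, ∀ j ∉ S, lam j ≤ lam i) :
    ∑ i, lam i * q i ≤ ∑ i ∈ S, lam i := by
  classical
  rcases S.eq_empty_or_nonempty with rfl | hne
  · have hq : ∀ i, q i = 0 := fun i ↦ (Finset.sum_eq_zero_iff_of_nonneg fun i _ ↦ hq0 i).mp
      (le_antisymm (by simpa using hqS) (Finset.sum_nonneg fun i _ ↦ hq0 i)) i (Finset.mem_univ i)
    simp [hq]
  -- `t = min_S lam` separates `S` from its complement, and the mass of `q` outside `S` is at
  -- most its deficit `∑ i ∈ S, (1 - q i)` inside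
  set t := S.inf' hne lam
  have ht : 0 ≤ t := Finset.le_inf' hne lam fun i _ ↦ hlam i
  have hout : ∑ i ∈ Sᶜ, lam i * q i ≤ t * ∑ i ∈ Sᶜ, q i := by
    rw [Finset.mul_sum]
    exact Finset.sum_le_sum fun j hj ↦ mul_le_mul_of_nonneg_right
      (Finset.le_inf' hne lam fun i hi ↦ hS i hi j (Finset.mem_compl.mp hj)) (hq0 j)
  have hin : t * ∑ i ∈ S, (1 - q i) ≤ ∑ i ∈ S, lam i * (1 - q i) := by
    rw [Finset.mul_sum]
    exact Finset.sum_le_sum fun i hi ↦ mul_le_mul_of_nonneg_right (Finset.inf'_le lam hi)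
      (sub_nonneg.mpr (hq1 i))
  have hmass : ∑ i ∈ Sᶜ, q i ≤ ∑ i ∈ S, (1 - q i) := by
    rw [Finset.sum_sub_distrib, Finset.sum_const, nsmul_one]
    linarith [Finset.sum_add_sum_compl S q]
  calc ∑ i, lam i * q i = ∑ i ∈ S, lam i * q i + ∑ i ∈ Sᶜ, lam i * q i :=
        (Finset.sum_add_sum_compl S _).symm
    _ ≤ ∑ i ∈ S, lam i * q i + ∑ i ∈ S, lam i * (1 - q i) := by
        nlinarith [mul_le_mul_of_nonneg_left hmass ht]
    _ = ∑ i ∈ S, lam i := by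
        rw [← Finset.sum_add_distrib]
        exact Finset.sum_congr rfl fun i _ ↦ by ring

section Projection

variable {ι κ : Type*} [Fintype ι] [Fintype κ]

theorem IsStarProjection.matrix_transpose_eq {P : Matrix ι ι ℝ} (hP : IsStarProjection P) :
    Pᵀ = P := by
  rw [← conjTranspose_eq_transpose_of_trivial, ← star_eq_conjTranspose, hP.isSelfAdjoint.star_eq]

theorem IsStarProjection.trace_mul_mul_transpose {P : Matrix ι ι ℝ} (hP : IsStarProjection P)
    (Z : Matrix ι κ ℝ) (S : Matrix κ κ ℝ) :
    (P * Z * S * (P * Z)ᵀ).trace = (P * (Z * S * Zᵀ)).trace := by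
  rw [transpose_mul, hP.matrix_transpose_eq,
    show P * Z * S * (Zᵀ * P) = P * (Z * S * Zᵀ) * P by simp only [Matrix.mul_assoc],
    trace_mul_comm, ← Matrix.mul_assoc, hP.isIdempotentElem.eq]

variable [DecidableEq ι]

theorem IsStarProjection.trace_sub_mul_sub_transpose {P : Matrix ι ι ℝ} (hP : IsStarProjection P)
    {A : Matrix ι κ ℝ} (hA : P * A = A) (G : Matrix ι κ ℝ) (S : Matrix κ κ ℝ) :
    ((A - G) * S * (A - G)ᵀ).trace = (P * (A - G) * S * (P * (A - G))ᵀ).trace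
      + (G * S * Gᵀ).trace - (P * (G * S * Gᵀ)).trace := by
  have hQ : (1 - P) * (A - G) = -((1 - P) * G) := by
    rw [Matrix.mul_sub, Matrix.sub_mul, Matrix.one_mul, hA, sub_self, zero_sub]
  have hQtr : ((1 - P) * ((A - G) * S * (A - G)ᵀ)).trace = ((1 - P) * (G * S * Gᵀ)).trace := by
    rw [← hP.one_sub.trace_mul_mul_transpose, hQ, ← hP.one_sub.trace_mul_mul_transpose]
    simp only [transpose_neg, Matrix.neg_mul, Matrix.mul_neg, neg_neg]
  rw [hP.trace_mul_mul_transpose]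
  rw [Matrix.sub_mul 1 P, Matrix.sub_mul 1 P, Matrix.one_mul, Matrix.one_mul, trace_sub,
    trace_sub] at hQtr
  linarith

theorem IsStarProjection.trace_sub_le_trace_sub_mul_sub_transpose {P : Matrix ι ι ℝ}
    (hP : IsStarProjection P) {A : Matrix ι κ ℝ} (hA : P * A = A) (G : Matrix ι κ ℝ)
    {S : Matrix κ κ ℝ} (hS : S.PosSemidef) :
    (G * S * Gᵀ).trace - (P * (G * S * Gᵀ)).trace ≤ ((A - G) * S * (A - G)ᵀ).trace := by
  have hnonneg := (hS.mul_mul_conjTranspose_same (P * (A - G))).trace_nonneg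
  rw [conjTranspose_eq_transpose_of_trivial] at hnonneg
  linarith [hP.trace_sub_mul_sub_transpose hA G S]

theorem IsStarProjection.trace_mul_sub_mul_sub_transpose {P : Matrix ι ι ℝ}
    (hP : IsStarProjection P) (G : Matrix ι κ ℝ) (S : Matrix κ κ ℝ) :
    ((P * G - G) * S * (P * G - G)ᵀ).trace = (G * S * Gᵀ).trace - (P * (G * S * Gᵀ)).trace := by
  have hA : P * (P * G) = P * G := by rw [← Matrix.mul_assoc, hP.isIdempotentElem.eq]
  rw [hP.trace_sub_mul_sub_transpose hA, Matrix.mul_sub, hA, sub_self]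
  simp

theorem Matrix.exists_isStarProjection_mul_eq_self_trace_le [DecidableEq κ] (Y : Matrix ι κ ℝ) :
    ∃ P : Matrix ι ι ℝ, IsStarProjection P ∧ P * Y = Y ∧ P.trace ≤ Fintype.card κ := by
  set K := LinearMap.range (toEuclideanLin Y)
  set p := K.starProjection
  set e := toEuclideanCLM (𝕜 := ℝ) (n := ι)
  have hp : IsStarProjection p := isStarProjection_starProjection
  have hP : toEuclideanLin (e.symm p) = p := by
    rw [← coe_toEuclideanCLM_eq_toEuclideanLin, StarAlgEquiv.apply_symm_apply]
  refine ⟨e.symm p, ⟨?_, ?_⟩, ?_, ?_⟩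
  · rw [IsIdempotentElem, ← map_mul, hp.isIdempotentElem.eq]
  · exact (e.symm.map_star' p).symm.trans (congrArg e.symm hp.isSelfAdjoint.star_eq)
  · apply toEuclideanLin.injective
    ext1 v
    rw [toLpLin_mul_same, LinearMap.comp_apply, hP]
    exact K.starProjection_eq_self_iff.mpr (LinearMap.mem_range_self _ v)
  · have hproj : LinearMap.IsProj K (p : _ →ₗ[ℝ] _) :=
      ⟨K.starProjection_apply_mem, fun _ ↦ K.starProjection_eq_self_iff.mpr⟩
    calc (e.symm p).trace = LinearMap.trace ℝ _ (toEuclideanLin (e.symm p)) := by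
          rw [toEuclideanLin_eq_toLin_orthonormal, Matrix.trace_toLin_eq]
      _ = Module.finrank ℝ K := by rw [hP, hproj.trace]
      _ ≤ Fintype.card κ := by
          exact_mod_cast (LinearMap.finrank_range_le _).trans finrank_euclideanSpace.le

end Projection

theorem Matrix.trace_mul_mul_transpose_sub_two_mul_trace {ι κ : Type*} [Fintype ι] [Fintype κ]
    [DecidableEq κ] {S : Matrix κ κ ℝ} (hS : S.IsSymm) (hdet : IsUnit S.det)
    (A K : Matrix ι κ ℝ) :
    (A * S * Aᵀ).trace - 2 * (A * Kᵀ).trace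
      = ((A - K * S⁻¹) * S * (A - K * S⁻¹)ᵀ).trace - (K * S⁻¹ * S * (K * S⁻¹)ᵀ).trace := by
  have hcross : (K * S⁻¹ * S * Aᵀ).trace = (A * Kᵀ).trace := by
    rw [Matrix.mul_assoc K, nonsing_inv_mul _ hdet, Matrix.mul_one, ← trace_transpose,
      transpose_mul, transpose_transpose]
  have hcross' : (A * S * (K * S⁻¹)ᵀ).trace = (A * Kᵀ).trace := by
    rw [← trace_transpose, ← hcross]
    simp only [transpose_mul, transpose_transpose, hS.eq, Matrix.mul_assoc]
  simp only [transpose_sub, Matrix.sub_mul, Matrix.mul_sub, trace_sub, hcross, hcross']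
  ring

theorem Matrix.mul_inv_mul_mul_transpose_eq {ι κ : Type*} [Fintype ι] [Fintype κ]
    [DecidableEq κ] {S : Matrix κ κ ℝ} (hS : S.IsSymm) (hdet : IsUnit S.det) (W : Matrix ι ι ℝ)
    (C : Matrix ι κ ℝ) :
    W * C * S⁻¹ * S * (W * C * S⁻¹)ᵀ = W * C * S⁻¹ * Cᵀ * Wᵀ := by
  simp only [transpose_mul, transpose_nonsing_inv, hS.eq, Matrix.mul_assoc,
    nonsing_inv_mul_cancel_left _ _ hdet]

theorem Matrix.reducedRank_loss_eq {ι κ γ : Type*} [Fintype ι] [Fintype κ] [Fintype γ]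
    [DecidableEq κ] {S : Matrix κ κ ℝ} (hS : S.IsSymm) (hdet : IsUnit S.det)
    (W : Matrix ι ι ℝ) (C : Matrix ι κ ℝ) (B : Matrix ι γ ℝ) (L : Matrix γ κ ℝ) :
    (W * B * L * S * Lᵀ * Bᵀ * Wᵀ).trace - 2 * (W * B * L * Cᵀ * Wᵀ).trace
      = ((W * B * L - W * C * S⁻¹) * S * (W * B * L - W * C * S⁻¹)ᵀ).trace
        - (W * C * S⁻¹ * Cᵀ * Wᵀ).trace := by
  have hsq := trace_mul_mul_transpose_sub_two_mul_trace hS hdet (W * B * L) (W * C)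
  rw [mul_inv_mul_mul_transpose_eq hS hdet] at hsq
  rw [← hsq]
  simp only [transpose_mul, Matrix.mul_assoc]

section Spectral

variable {ι : Type*} [Fintype ι] [DecidableEq ι]

theorem Matrix.IsHermitian.exists_orthogonal_diagonalization {M : Matrix ι ι ℝ}
    (hM : M.IsHermitian) :
    ∃ U : Matrix ι ι ℝ, Uᵀ * U = 1 ∧ U * Uᵀ = 1 ∧ M = U * diagonal hM.eigenvalues * Uᵀ := by
  refine ⟨hM.eigenvectorUnitary, ?_, ?_, ?_⟩
  · simp [← conjTranspose_eq_transpose_of_trivial, ← star_eq_conjTranspose]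
  · simp [← conjTranspose_eq_transpose_of_trivial, ← star_eq_conjTranspose]
  · conv_lhs => rw [hM.spectral_theorem]
    simp [Unitary.conjStarAlgAut_apply, ← conjTranspose_eq_transpose_of_trivial,
      star_eq_conjTranspose]

open scoped MatrixOrder in
theorem Matrix.IsHermitian.trace_mul_le_sum_eigenvalues {M P : Matrix ι ι ℝ} (hM : M.IsHermitian)
    (hM0 : ∀ i, 0 ≤ hM.eigenvalues i) (hP : IsStarProjection P) {S : Finset ι}
    (hPS : P.trace ≤ S.card) (hS : ∀ i ∈ S, ∀ j ∉ S, hM.eigenvalues j ≤ hM.eigenvalues i) :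
    (P * M).trace ≤ ∑ i ∈ S, hM.eigenvalues i := by
  obtain ⟨U, hUtU, hUUt, hMU⟩ := hM.exists_orthogonal_diagonalization
  set lam := hM.eigenvalues
  have hUstar : star U = Uᵀ := by rw [star_eq_conjTranspose, conjTranspose_eq_transpose_of_trivial]
  -- `Q i i = ‖P uᵢ‖²` for the eigenvectors `uᵢ`, the weights in Ky Fan's inequality
  set Q := Uᵀ * P * U
  have hQ0 : Q.PosSemidef := by
    have h := star_left_conjugate_nonneg hP.nonneg U
    rw [hUstar] at h
    exact nonneg_iff_posSemidef.mp h
  have hQ1 : (1 - Q).PosSemidef := by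
    have h := star_left_conjugate_le_conjugate hP.le_one U
    rw [Matrix.mul_one, hUstar, hUtU] at h
    exact le_iff.mp h
  have htr : (P * M).trace = ∑ i, lam i * Q i i := by
    rw [hMU, show P * (U * diagonal lam * Uᵀ) = P * U * diagonal lam * Uᵀ by
      simp only [Matrix.mul_assoc], trace_mul_comm, ← Matrix.mul_assoc, ← Matrix.mul_assoc]
    simp only [trace, diag_apply, mul_diagonal, Q, mul_comm]
  rw [htr]
  refine Finset.sum_mul_le_sum_of_forall_le hM0 (fun i ↦ hQ0.diag_nonneg) (fun i ↦ ?_) ?_ hS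
  · simpa using hQ1.diag_nonneg (i := i)
  · refine le_of_eq_of_le ?_ hPS
    change Q.trace = P.trace
    rw [trace_mul_cycle, hUUt, Matrix.one_mul]

theorem Matrix.IsHermitian.exists_isStarProjection_eq_mul_mul_trace_eq {M : Matrix ι ι ℝ}
    (hM : M.IsHermitian) {S : Finset ι} {c : ℕ} (hS : S.card = c) :
    ∃ (P : Matrix ι ι ℝ) (Y : Matrix ι (Fin c) ℝ) (Z : Matrix (Fin c) ι ℝ),
      IsStarProjection P ∧ P = M * Y * Z ∧ (P * M).trace = ∑ i ∈ S, hM.eigenvalues i := by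
  obtain ⟨U, hUtU, -, hMU⟩ := hM.exists_orthogonal_diagonalization
  set lam := hM.eigenvalues
  let σ : Fin c ≃ S := (Fintype.equivFinOfCardEq (by simp [hS])).symm
  set e : Fin c → ι := fun k ↦ σ k
  have he : Function.Injective e := Subtype.val_injective.comp σ.injective
  set V := U.submatrix id e
  set d : Fin c → ℝ := fun k ↦ lam (e k)
  have hVV : Vᵀ * V = 1 := by
    rw [transpose_submatrix, ← submatrix_mul _ _ _ _ _ Function.bijective_id, hUtU,
      submatrix_one _ he]
  have hMV : M * V = V * diagonal d := by
    have hMU' : M * U = U * diagonal lam := by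
      rw [hMU, Matrix.mul_assoc, hUtU, Matrix.mul_one]
    have hsub : M * V = (M * U).submatrix id e := by
      rw [submatrix_mul _ _ _ id _ Function.bijective_id]
      rfl
    rw [hsub, hMU']
    ext i k
    simp [V, d, mul_diagonal]
  have hVM : Vᵀ * M = diagonal d * Vᵀ := by
    rw [← (isHermitian_iff_isSymm.mp hM).eq, ← transpose_mul, hMV, transpose_mul,
      diagonal_transpose]
  -- zero eigenvalues are dropped from the projection so that it factors through `M`
  set Δ := diagonal fun k ↦ d k * (d k)⁻¹
  have hΔ : Δ * Δ = Δ := by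
    rw [diagonal_mul_diagonal]
    congr 1
    funext k
    by_cases hk : d k = 0 <;> simp [hk]
  refine ⟨V * Δ * Vᵀ, V * diagonal d⁻¹, Vᵀ, ⟨?_, ?_⟩, ?_, ?_⟩
  · calc V * Δ * Vᵀ * (V * Δ * Vᵀ) = V * (Δ * (Vᵀ * V) * Δ) * Vᵀ := by
          simp only [Matrix.mul_assoc]
      _ = V * Δ * Vᵀ := by rw [hVV, Matrix.mul_one, hΔ]
  · rw [IsSelfAdjoint, star_eq_conjTranspose, conjTranspose_eq_transpose_of_trivial,
      transpose_mul, transpose_mul, transpose_transpose, diagonal_transpose, Matrix.mul_assoc]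
  · rw [← Matrix.mul_assoc, hMV, Matrix.mul_assoc V (diagonal d), diagonal_mul_diagonal]
    rfl
  · calc (V * Δ * Vᵀ * M).trace = (V * (Δ * diagonal d * Vᵀ)).trace := by
          rw [Matrix.mul_assoc _ Vᵀ M, hVM]
          simp only [Matrix.mul_assoc]
      _ = (Δ * diagonal d).trace := by rw [trace_mul_comm, Matrix.mul_assoc, hVV, Matrix.mul_one]
      _ = ∑ i ∈ S, lam i := by
          rw [diagonal_mul_diagonal, trace_diagonal, ← Finset.sum_coe_sort S, ← σ.sum_comp]
          exact Finset.sum_congr rfl fun k _ ↦ by simp [d, e]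

end Spectral

/-- Reduced-rank (canonical correlation) regression: with `Sxi ≻ 0`, the minimum of
`E[‖ν − B L ξ‖²_W] = tr(W Snu Wᵀ) − 2 tr(W B L Sxinu Wᵀ) + tr(W B L Sxi Lᵀ Bᵀ Wᵀ)` over
`L ∈ R^{c×n}` and `B ∈ R^{r×c}` equals `tr(W Snu Wᵀ)` minus the sum of the `c` largest
eigenvalues of `W Snuxi Sxi⁻¹ Sxinu Wᵀ` (the sum of the `c` largest eigenvalues being
the maximum over cardinality-`c` subsets of eigenvalues). -/
theorem stmt9 {r n c : ℕ} (hc : c ≤ min r n)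
    (Snu : Matrix (Fin r) (Fin r) ℝ) (Snuxi : Matrix (Fin r) (Fin n) ℝ)
    (Sxi : Matrix (Fin n) (Fin n) ℝ) (hSxi : Sxi.PosDef)
    (W : Matrix (Fin r) (Fin r) ℝ)
    (hM : (W * Snuxi * Sxi⁻¹ * Snuxiᵀ * Wᵀ).IsHermitian)
    (f : Matrix (Fin c) (Fin n) ℝ → Matrix (Fin r) (Fin c) ℝ → ℝ)
    (hf : ∀ L B, f L B = (W * Snu * Wᵀ).trace - 2 * (W * B * L * Snuxiᵀ * Wᵀ).trace
        + (W * B * L * Sxi * Lᵀ * Bᵀ * Wᵀ).trace) :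
    IsLeast {d | ∃ (L : Matrix (Fin c) (Fin n) ℝ) (B : Matrix (Fin r) (Fin c) ℝ), d = f L B}
      ((W * Snu * Wᵀ).trace -
        sSup {s | ∃ S : Finset (Fin r), S.card = c ∧ s = ∑ i ∈ S, hM.eigenvalues i}) := by
  set G := W * Snuxi * Sxi⁻¹
  have hSymm := isHermitian_iff_isSymm.mp hSxi.isHermitian
  have hdet : IsUnit Sxi.det := (isUnit_iff_isUnit_det Sxi).mp hSxi.isUnit
  have hGM := mul_inv_mul_mul_transpose_eq hSymm hdet W Snuxi
  have hfG : ∀ L B, f L B = (W * Snu * Wᵀ).trace - (G * Snuxiᵀ * Wᵀ).trace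
      + ((W * B * L - G) * Sxi * (W * B * L - G)ᵀ).trace := fun L B ↦ by
    rw [hf]
    linarith [reducedRank_loss_eq hSymm hdet W Snuxi B L]
  obtain ⟨S, hScard, hSgreat⟩ := Finset.exists_card_eq_isGreatest_sum hM.eigenvalues
    (by simpa using hc.trans (min_le_left r n))
  rw [hSgreat.csSup_eq]
  refine ⟨?_, ?_⟩
  · obtain ⟨P, Y, Z, hP, hPYZ, htr⟩ := hM.exists_isStarProjection_eq_mul_mul_trace_eq hScard
    refine ⟨Z * G, Snuxi * Sxi⁻¹ * Snuxiᵀ * Wᵀ * Y, ?_⟩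
    have hA : W * (Snuxi * Sxi⁻¹ * Snuxiᵀ * Wᵀ * Y) * (Z * G) = P * G := by
      rw [hPYZ]
      simp only [G, Matrix.mul_assoc]
    rw [hfG, hA, hP.trace_mul_sub_mul_sub_transpose, hGM, htr]
    ring
  · rintro _ ⟨L, B, rfl⟩
    obtain ⟨P, hP, hPB, hPc⟩ := exists_isStarProjection_mul_eq_self_trace_le (W * B)
    have hPA : P * (W * B * L) = W * B * L := by rw [← Matrix.mul_assoc, hPB]
    have hlow := hP.trace_sub_le_trace_sub_mul_sub_transpose hPA G hSxi.posSemidef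
    have hM0 : ∀ i, 0 ≤ hM.eigenvalues i :=
      (hGM ▸ hSxi.posSemidef.mul_mul_conjTranspose_same G).eigenvalues_nonneg
    have hKyFan := hM.trace_mul_le_sum_eigenvalues hM0 hP (by simpa [hScard] using hPc)
      (Finset.le_of_isGreatest_sum hScard hSgreat)
    rw [hGM] at hlow
    rw [hfG]
    linarith
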